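/- arXiv:1411.1936 — 3 statements merged into one kernel-verified Lean document; each statement's English description precedes it below -/
import Mathlib

section
/- Let ρ = {r₁ < … < r_n} be positive knots, let α, ν₁, …, ν_n be real values, and let σ be either σ^A (the unique Beppo Levi L₀-spline on ρ with σ(r_j) = ν_j for all j and σ(0) = α) or σ^B (the unique non-singular Beppo Levi L₀-spline on ρ with σ(r_j) = ν_j for all j). Then there exist unique coefficients c, a₁, …, a_n such that σ(r) = c + Σ_{k=1}^n a_k·φ₀(r/r_k) for all r ≥ 0; moreover, if σ = σ^B, the coefficients additionally satisfy Σ_{k=1}^n a_k·r_k^{−2} = 0. -/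
open MeasureTheory Set Filter

noncomputable section

/-- The radial Beppo Levi energy space `Λ₀`: functions `f : (0,∞) → ℂ` of class `C¹`
whose derivative `f′` is locally absolutely continuous on compact subintervals of `(0,∞)`
(encoded by the fundamental theorem of calculus with an integrable density `f″`),
and whose radial Beppo Levi energy `∫₀^∞ ( r·|f″(r)|² + (1/r)·|f′(r)|² ) dr` is finite. -/
structure Lambda0 where
  f : ℝ → ℂ
  f' : ℝ → ℂ
  f'' : ℝ → ℂ
  hasDeriv : ∀ r ∈ Set.Ioi (0:ℝ), HasDerivAt f (f' r) r
  contDeriv : ContinuousOn f' (Set.Ioi 0)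
  locAC : ∀ a b : ℝ, 0 < a → a ≤ b →
    MeasureTheory.IntegrableOn f'' (Set.Icc a b) ∧
      ∀ x ∈ Set.Icc a b, f' x = f' a + ∫ t in a..x, f'' t
  energyFin : MeasureTheory.IntegrableOn
    (fun r : ℝ => r * ‖f'' r‖ ^ 2 + (1 / r) * ‖f' r‖ ^ 2) (Set.Ioi 0)

/-- The squared radial Beppo Levi energy `‖·‖₀²` of a function with first derivative `g'`
and second derivative `g''`. -/
def energySq (g' g'' : ℝ → ℂ) : ℝ :=
  ∫ r in Set.Ioi (0:ℝ), (r * ‖g'' r‖ ^ 2 + (1 / r) * ‖g' r‖ ^ 2)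

/-- The seminorm `‖f‖₀`. -/
def Lambda0.seminorm0 (F : Lambda0) : ℝ :=
  Real.sqrt (energySq F.f' F.f'')

/-- The semi-inner product `⟨f,g⟩₀`. -/
def innerBL (F G : Lambda0) : ℂ :=
  ∫ r in Set.Ioi (0:ℝ),
    ((r : ℂ) * F.f'' r * (starRingEnd ℂ) (G.f'' r) +
      (1 / (r : ℂ)) * F.f' r * (starRingEnd ℂ) (G.f' r))

/-- A Beppo Levi `L₀`-spline on the positive knots `r 1 < r 2 < … < r n`:
piecewise of the form `a·x² + b·x²·ln x + c + d·ln x` between consecutive knots,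
of the form `a·x² + b·x²·ln x + c` on `(0, r 1)`, of the form `c + d·ln x` on `(r n, ∞)`,
`C²` throughout `(0,∞)`, and continuously extended at `0`. -/
structure IsBLSpline (n : ℕ) (r : ℕ → ℝ) (η : ℝ → ℂ) : Prop where
  pieces : ∀ j : ℕ, 1 ≤ j → j + 1 ≤ n → ∃ a b c d : ℂ,
    ∀ x ∈ Set.Ioo (r j) (r (j + 1)),
      η x = a * (x : ℂ) ^ 2 + b * (x : ℂ) ^ 2 * (Real.log x : ℂ) + c + d * (Real.log x : ℂ)
  left : ∃ a b c : ℂ, ∀ x ∈ Set.Ioo (0 : ℝ) (r 1),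
      η x = a * (x : ℂ) ^ 2 + b * (x : ℂ) ^ 2 * (Real.log x : ℂ) + c
  right : ∃ c d : ℂ, ∀ x ∈ Set.Ioi (r n), η x = c + d * (Real.log x : ℂ)
  smooth : ContDiffOn ℝ 2 η (Set.Ioi 0)
  cont0 : ContinuousWithinAt η (Set.Ici 0) 0

/-- A Beppo Levi `L₀`-spline is non-singular if on `(0, r₁)` it has the form `a·x² + c`. -/
def NonSingularBLS (r1 : ℝ) (η : ℝ → ℂ) : Prop :=
  ∃ a c : ℂ, ∀ x ∈ Set.Ioo (0 : ℝ) r1, η x = a * (x : ℂ) ^ 2 + c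

/-- Rabut's kernel `K`. -/
def Kfun (r t : ℝ) : ℝ :=
  if r ≤ t then 0 else (1 / 4) * (t ^ 2 - r ^ 2 + (r ^ 2 + t ^ 2) * Real.log (r / t))

/-- The limiting kernel `H_{0,∞}` (with left endpoint knot `r1`). -/
def Hfun (r1 r t : ℝ) : ℝ :=
  Kfun r t - Kfun r r1 - Kfun r1 t + (1 / 4) * (r ^ 2 - r1 ^ 2) * Real.log (t / r1)

/-- The basis function `φ₀`. -/
def phi0 (r : ℝ) : ℝ :=
  if r ≤ 1 then r ^ 2 - r ^ 2 * Real.log r else 1 + Real.log r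

/-- Johnson's compactly supported profile `η₂`. -/
def eta2 (x : ℝ) : ℂ :=
  (((4 / 3 : ℝ) * (Real.log 2 - phi0 x + phi0 (x / 2)) : ℝ) : ℂ)

/-- The non-singular compactly supported profile `β`. -/
def betaFn (x : ℝ) : ℂ :=
  (((1 / 5 : ℝ) * (27 * Real.log 3 - 32 * Real.log 2 + 5 * phi0 x
      - 32 * phi0 (x / 2) + 27 * phi0 (x / 3)) : ℝ) : ℂ)

/-- `Ker L₀ = span{r², r² ln r, 1, ln r}`, as functions on `(0,∞)`. -/
def KerL0 : Set (ℝ → ℂ) :=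
  {η | ∃ a b c d : ℂ, ∀ x : ℝ, 0 < x →
    η x = a * (x : ℂ) ^ 2 + b * (x : ℂ) ^ 2 * (Real.log x : ℂ) + c + d * (Real.log x : ℂ)}

/-- `α(h) = inf_{η ∈ Ker L₀} sup_{t ∈ [0,1]} |t^μ − η(1+th)|`. -/
def alphaFn (μ h : ℝ) : ℝ :=
  sInf {v : ℝ | ∃ η ∈ KerL0,
    v = sSup ((fun t : ℝ => ‖((t ^ μ : ℝ) : ℂ) - η (1 + t * h)‖) '' Set.Icc (0 : ℝ) 1)}

/-!
On each gap between consecutive knots, `σ` is a kernel function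
`a x² + b x² log x + c + d log x`, and these four functions are linearly independent on any
interval. As `σ` is `C²`, the value and first two derivatives of the two pieces meeting at a knot
`t` agree, which forces their difference to be `t² (b' - b)` times the difference of the two
pieces of `x ↦ φ₀ (x / t)`. Summing these jumps, `σ - ∑ a_k φ₀ (· / r_k)` is one kernel function
with no `log` term (read off on the first gap) and no `x²`, `x² log x` terms (read off on the last
gap), hence a constant, equal to `σ 0` by continuity.

For uniqueness, just below the largest knot `t` of a vanishing combination `∑ a_k φ₀ (· / r_k)`
its `x² log x` coefficient is `-a_t / t²`, so `a_t = 0`, and we induct. On `(0, r₁)` the same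
coefficient is `-∑ a_k r_k⁻²`, which vanishes for a non-singular spline.
-/

open Topology

def kerFun (a b c d : ℂ) (x : ℝ) : ℂ :=
  a * (x : ℂ) ^ 2 + b * (x : ℂ) ^ 2 * (Real.log x : ℂ) + c + d * (Real.log x : ℂ)

lemma sum_mul_kerFun {ι : Type*} (s : Finset ι) (w a b c d : ι → ℂ) (x : ℝ) :
    ∑ k ∈ s, w k * kerFun (a k) (b k) (c k) (d k) x =
      kerFun (∑ k ∈ s, w k * a k) (∑ k ∈ s, w k * b k) (∑ k ∈ s, w k * c k)
        (∑ k ∈ s, w k * d k) x := by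
  simp only [kerFun, Finset.sum_mul, ← Finset.sum_add_distrib]
  exact Finset.sum_congr rfl fun k _ => by ring

lemma contDiffOn_kerFun (a b c d : ℂ) : ContDiffOn ℝ 2 (kerFun a b c d) (Ioi 0) := by
  have hlog : ContDiffOn ℝ 2 (fun x : ℝ => (Real.log x : ℂ)) (Ioi 0) :=
    Complex.ofRealCLM.contDiff.comp_contDiffOn
      (Real.contDiffOn_log.mono fun x hx => ne_of_gt hx)
  have hid : ContDiffOn ℝ 2 (fun x : ℝ => (x : ℂ)) (Ioi 0) :=
    Complex.ofRealCLM.contDiff.contDiffOn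
  unfold kerFun
  fun_prop

lemma hasDerivAt_kerFun (a b c d : ℂ) {x : ℝ} (hx : 0 < x) :
    HasDerivAt (kerFun a b c d)
      (2 * a * x + b * (2 * x * Real.log x + x) + d / x) x := by
  have hid : HasDerivAt (fun y : ℝ => (y : ℂ)) 1 x := (hasDerivAt_id x).ofReal_comp
  have hlog : HasDerivAt (fun y : ℝ => (Real.log y : ℂ)) (x⁻¹ : ℝ) x :=
    (Real.hasDerivAt_log hx.ne').ofReal_comp
  have h := ((((hid.pow 2).const_mul a).add (((hid.pow 2).mul hlog).const_mul b)).add_const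
    c).add (hlog.const_mul d)
  refine (h.congr_of_eventuallyEq (.of_forall fun y => ?_)).congr_deriv ?_
  · simp only [kerFun, Pi.add_apply, Pi.mul_apply, Pi.pow_apply]
    ring
  · simp only [Pi.pow_apply]
    push_cast
    field_simp

lemma hasDerivAt_deriv_kerFun (a b c d : ℂ) {x : ℝ} (hx : 0 < x) :
    HasDerivAt (deriv (kerFun a b c d))
      (2 * a + b * (2 * Real.log x + 3) - d / (x : ℂ) ^ 2) x := by
  have hid : HasDerivAt (fun y : ℝ => (y : ℂ)) 1 x := (hasDerivAt_id x).ofReal_comp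
  have hlog : HasDerivAt (fun y : ℝ => (Real.log y : ℂ)) (x⁻¹ : ℝ) x :=
    (Real.hasDerivAt_log hx.ne').ofReal_comp
  have hx0 : (x : ℂ) ≠ 0 := by exact_mod_cast hx.ne'
  have h := ((hid.const_mul (2 * a)).add (((hid.const_mul 2).mul hlog).add hid |>.const_mul b)).add
    (hid.inv hx0 |>.const_mul d)
  refine (h.congr_of_eventuallyEq ?_).congr_deriv ?_
  · filter_upwards [Ioi_mem_nhds hx] with y hy
    rw [(hasDerivAt_kerFun a b c d hy).deriv]
    simp [div_eq_mul_inv]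
  · push_cast
    field_simp
    ring

def jet2 (f : ℝ → ℂ) (t : ℝ) : ℂ × ℂ × ℂ := (f t, deriv f t, deriv (deriv f) t)

lemma jet2_kerFun (a b c d : ℂ) {t : ℝ} (ht : 0 < t) :
    jet2 (kerFun a b c d) t = (kerFun a b c d t,
      2 * a * t + b * (2 * t * Real.log t + t) + d / t,
      2 * a + b * (2 * Real.log t + 3) - d / (t : ℂ) ^ 2) :=
  Prod.ext rfl (Prod.ext (hasDerivAt_kerFun a b c d ht).deriv
    (hasDerivAt_deriv_kerFun a b c d ht).deriv)

lemma jet2_eq_of_eqOn {f g : ℝ → ℂ} (hf : ContDiffOn ℝ 2 f (Ioi 0))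
    (hg : ContDiffOn ℝ 2 g (Ioi 0)) {s : Set ℝ} (hs : IsOpen s) (hs0 : s ⊆ Ioi 0)
    (hfg : EqOn f g s) {t : ℝ} (ht : 0 < t) (hts : t ∈ closure s) :
    jet2 f t = jet2 g t := by
  have hsub : insert t s ⊆ Ioi 0 := insert_subset ht hs0
  have key : ∀ {F G : ℝ → ℂ}, ContinuousOn F (Ioi 0) → ContinuousOn G (Ioi 0) →
      EqOn F G s → F t = G t := fun hF hG hFG =>
    hFG.of_subset_closure (hF.mono hsub) (hG.mono hsub) (subset_insert t s)
      (insert_subset hts subset_closure) (mem_insert t s)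
  have hf' := hf.deriv_of_isOpen isOpen_Ioi (m := 1) le_rfl
  have hg' := hg.deriv_of_isOpen isOpen_Ioi (m := 1) le_rfl
  have h1 := hfg.deriv hs
  exact Prod.ext (key hf.continuousOn hg.continuousOn hfg)
    (Prod.ext (key hf'.continuousOn hg'.continuousOn h1)
      (key (hf'.continuousOn_deriv_of_isOpen isOpen_Ioi le_rfl)
        (hg'.continuousOn_deriv_of_isOpen isOpen_Ioi le_rfl) (h1.deriv hs)))

lemma kerFun_coeffs_of_jet2_eq {a b c d a' b' c' d' : ℂ} {t : ℝ} (ht : 0 < t)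
    (h : jet2 (kerFun a b c d) t = jet2 (kerFun a' b' c' d') t) :
    a' - a = -(Real.log t + 1) * (b' - b) ∧
      c' - c = (t : ℂ) ^ 2 * (1 - Real.log t) * (b' - b) ∧ d' - d = (t : ℂ) ^ 2 * (b' - b) := by
  have hT : (t : ℂ) ≠ 0 := by exact_mod_cast ht.ne'
  rw [jet2_kerFun _ _ _ _ ht, jet2_kerFun _ _ _ _ ht] at h
  simp only [Prod.mk.injEq, kerFun] at h
  obtain ⟨h0, h1, h2⟩ := h
  field_simp at h1 h2
  have hd : d' - d = (t : ℂ) ^ 2 * (b' - b) := by linear_combination (h2 - h1) / 2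
  have ha : a' - a = -(Real.log t + 1) * (b' - b) := by
    have h' : (4 * (t : ℂ) ^ 2) * (a' - a + (Real.log t + 1) * (b' - b)) = 0 := by
      linear_combination -h1 - h2
    linear_combination (mul_eq_zero.mp h').resolve_left (by simp [hT])
  exact ⟨ha, by linear_combination -h0 - (t : ℂ) ^ 2 * ha - (Real.log t : ℂ) * hd, hd⟩

lemma kerFun_coeffs_eq_of_eqOn {a b c d a' b' c' d' : ℂ} {u v : ℝ} (hu : 0 ≤ u) (huv : u < v)
    (h : EqOn (kerFun a b c d) (kerFun a' b' c' d') (Ioo u v)) :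
    a = a' ∧ b = b' ∧ c = c' ∧ d = d' := by
  have hsub : Ioo u v ⊆ Ioi 0 := fun x hx => hu.trans_lt hx.1
  have hrel : ∀ t ∈ Ioo u v, _ := fun t ht => kerFun_coeffs_of_jet2_eq (hsub ht)
    (jet2_eq_of_eqOn (contDiffOn_kerFun a b c d) (contDiffOn_kerFun a' b' c' d') isOpen_Ioo
      hsub h (hsub ht) (subset_closure ht))
  obtain ⟨t₁, ht₁⟩ := exists_between huv
  obtain ⟨t₂, ht₂⟩ := exists_between ht₁.2
  have ht₁₂ : (t₁ : ℂ) ^ 2 - (t₂ : ℂ) ^ 2 ≠ 0 := by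
    norm_cast
    nlinarith [ht₁.1, ht₂.1]
  obtain ⟨ha₁, hc₁, hd₁⟩ := hrel t₁ ht₁
  obtain ⟨-, -, hd₂⟩ := hrel t₂ ⟨ht₁.1.trans ht₂.1, ht₂.2⟩
  have hb : b' - b = 0 :=
    (mul_eq_zero.mp (by linear_combination hd₂ - hd₁ : ((t₁ : ℂ) ^ 2 - t₂ ^ 2) * (b' - b) = 0)
      ).resolve_left ht₁₂
  refine ⟨?_, ?_, ?_, ?_⟩
  · linear_combination -ha₁ + (Real.log t₁ + 1 : ℂ) * hb
  · linear_combination -hb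
  · linear_combination -hc₁ - (t₁ : ℂ) ^ 2 * (1 - Real.log t₁) * hb
  · linear_combination -hd₁ - (t₁ : ℂ) ^ 2 * hb

lemma apply_zero_eq_of_eqOn_kerFun {σ : ℝ → ℂ} (hσ : ContinuousWithinAt σ (Ici 0) 0) {v : ℝ}
    (hv : 0 < v) {a b c : ℂ} (h : EqOn σ (kerFun a b c 0) (Ioo 0 v)) : σ 0 = c := by
  have hmul : Continuous fun x : ℝ => ((x * (x * Real.log x) : ℝ) : ℂ) := by
    have := Real.continuous_mul_log
    fun_prop
  have hker : Continuous (kerFun a b c 0) := by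
    convert (show Continuous fun x : ℝ => a * (x : ℂ) ^ 2 + b * ((x * (x * Real.log x) : ℝ) : ℂ) + c
      by fun_prop) using 2 with x
    simp only [kerFun]
    push_cast
    ring
  have hlim : Tendsto (kerFun a b c 0) (𝓝[>] 0) (𝓝 c) := by
    simpa [kerFun] using (hker.tendsto 0).mono_left nhdsWithin_le_nhds
  exact tendsto_nhds_unique ((hσ.mono Ioi_subset_Ici_self).tendsto.congr'
    (eventuallyEq_of_mem (Ioo_mem_nhdsGT hv) h)) hlim

def phi0Left (t : ℝ) : ℝ → ℂ := kerFun ((1 + Real.log t) / (t : ℂ) ^ 2) (-1 / (t : ℂ) ^ 2) 0 0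

def phi0Right (t : ℝ) : ℝ → ℂ := kerFun 0 0 (1 - Real.log t) 1

lemma phi0_div_of_le {x t : ℝ} (hx : 0 < x) (hxt : x ≤ t) :
    (phi0 (x / t) : ℂ) = phi0Left t x := by
  have ht : 0 < t := hx.trans_le hxt
  rw [phi0, if_pos ((div_le_one ht).mpr hxt), Real.log_div hx.ne' ht.ne', phi0Left, kerFun]
  push_cast
  field_simp
  ring

lemma phi0_div_of_lt {x t : ℝ} (ht : 0 < t) (htx : t < x) :
    (phi0 (x / t) : ℂ) = phi0Right t x := by
  rw [phi0, if_neg (not_le.mpr ((one_lt_div ht).mpr htx)),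
    Real.log_div (ht.trans htx).ne' ht.ne', phi0Right, kerFun]
  push_cast
  ring

lemma sum_mul_phi0Left {ι : Type*} (s : Finset ι) (w : ι → ℂ) (t : ι → ℝ) (x : ℝ) :
    ∑ k ∈ s, w k * phi0Left (t k) x =
      kerFun (∑ k ∈ s, w k * ((1 + Real.log (t k)) / (t k : ℂ) ^ 2))
        (∑ k ∈ s, w k * (-1 / (t k : ℂ) ^ 2)) 0 0 x := by
  simpa [phi0Left] using sum_mul_kerFun s w _ _ (fun _ => 0) (fun _ => 0) x

lemma sum_mul_phi0Right {ι : Type*} (s : Finset ι) (w : ι → ℂ) (t : ι → ℝ) (x : ℝ) :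
    ∑ k ∈ s, w k * phi0Right (t k) x =
      kerFun 0 0 (∑ k ∈ s, w k * (1 - Real.log (t k))) (∑ k ∈ s, w k) x := by
  simpa [phi0Right] using sum_mul_kerFun s w (fun _ => 0) (fun _ => 0) _ (fun _ => 1) x

lemma kerFun_eq_add_of_jet2_eq {a b c d a' b' c' d' : ℂ} {t : ℝ} (ht : 0 < t)
    (h : jet2 (kerFun a b c d) t = jet2 (kerFun a' b' c' d') t) (x : ℝ) :
    kerFun a' b' c' d' x =
      kerFun a b c d x + t ^ 2 * (b' - b) * (phi0Right t x - phi0Left t x) := by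
  obtain ⟨ha, hc, hd⟩ := kerFun_coeffs_of_jet2_eq ht h
  have hT : (t : ℂ) ≠ 0 := by exact_mod_cast ht.ne'
  simp only [phi0Right, phi0Left, kerFun]
  linear_combination (norm := skip) (x : ℂ) ^ 2 * ha + hc + Real.log x * hd
  field_simp
  ring

lemma eq_zero_of_forall_sum_mul_phi0_div_eq_zero {ι : Type*} [DecidableEq ι] (s : Finset ι)
    {t : ι → ℝ} (ht : ∀ k ∈ s, 0 < t k) (hinj : InjOn t s) {w : ι → ℂ}
    (h : ∀ x : ℝ, 0 < x → ∑ k ∈ s, w k * phi0 (x / t k) = 0) : ∀ k ∈ s, w k = 0 := by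
  induction s using Finset.induction_on_max_value t with
  | empty => simp
  | insert a s ha hmax ih =>
    have hlt : ∀ k ∈ s, t k < t a := fun k hk => (hmax k hk).lt_of_ne fun he =>
      ha (hinj (by simp [hk]) (by simp) he ▸ hk)
    have hta : 0 < t a := ht a (Finset.mem_insert_self a s)
    obtain ⟨l, hl, hls⟩ : ∃ l ∈ Iio (t a), Ioo l (t a) ⊆ {x | ∀ k ∈ s, t k < x} :=
      mem_nhdsLT_iff_exists_Ioo_subset.1 <| nhdsWithin_le_nhds <|
        (eventually_all_finset s).2 fun k hk => lt_mem_nhds (hlt k hk)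
    have hwa : w a = 0 := by
      have hEq : EqOn (kerFun (w a * ((1 + Real.log (t a)) / (t a : ℂ) ^ 2))
          (w a * (-1 / (t a : ℂ) ^ 2)) (∑ k ∈ s, w k * (1 - Real.log (t k))) (∑ k ∈ s, w k))
          (kerFun 0 0 0 0) (Ioo (max l 0) (t a)) := by
        intro x hx
        have hx0 : 0 < x := (le_max_right l 0).trans_lt hx.1
        have hxs : ∀ k ∈ s, t k < x := hls ⟨(le_max_left l 0).trans_lt hx.1, hx.2⟩
        have := h x hx0
        rw [Finset.sum_insert ha, phi0_div_of_le hx0 hx.2.le,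
          Finset.sum_congr rfl fun k hk => by rw [phi0_div_of_lt (ht k (by simp [hk])) (hxs k hk)],
          sum_mul_phi0Right, phi0Left] at this
        simp only [kerFun] at this ⊢
        linear_combination this
      have hb := (kerFun_coeffs_eq_of_eqOn (le_max_right l 0) (max_lt hl hta) hEq).2.1
      have hT : (t a : ℂ) ≠ 0 := by exact_mod_cast hta.ne'
      simpa [hT] using hb
    intro k hk
    rcases Finset.mem_insert.1 hk with rfl | hk
    · exact hwa
    · refine ih (fun k hk => ht k (by simp [hk])) (hinj.mono (by simp)) (fun x hx => ?_) k hk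
      simpa [Finset.sum_insert ha, hwa] using h x hx

lemma NonSingularBLS.sum_mul_zpow_eq_zero {ι : Type*} {σ : ℝ → ℂ} {v : ℝ}
    (hσ : NonSingularBLS v σ) (hv : 0 < v) {s : Finset ι} {t : ι → ℝ} (hvt : ∀ k ∈ s, v ≤ t k)
    {c : ℂ} {w : ι → ℂ} (h : ∀ x ∈ Ioo 0 v, σ x = c + ∑ k ∈ s, w k * phi0 (x / t k)) :
    ∑ k ∈ s, w k * (t k : ℂ) ^ (-2 : ℤ) = 0 := by
  obtain ⟨a, c₀, hσ⟩ := hσ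
  have hEq : EqOn (kerFun a 0 c₀ 0) (kerFun (∑ k ∈ s, w k * ((1 + Real.log (t k)) / (t k : ℂ) ^ 2))
      (∑ k ∈ s, w k * (-1 / (t k : ℂ) ^ 2)) c 0) (Ioo 0 v) := by
    intro x hx
    have hx' := h x hx
    rw [Finset.sum_congr rfl fun k hk => by rw [phi0_div_of_le hx.1 (hx.2.le.trans (hvt k hk))],
      sum_mul_phi0Left, hσ x hx] at hx'
    simp only [kerFun] at hx' ⊢
    linear_combination hx'
  have hb := (kerFun_coeffs_eq_of_eqOn le_rfl hv hEq).2.1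
  calc ∑ k ∈ s, w k * (t k : ℂ) ^ (-2 : ℤ) = -∑ k ∈ s, w k * (-1 / (t k : ℂ) ^ 2) := by
        rw [← Finset.sum_neg_distrib]
        exact Finset.sum_congr rfl fun k _ => by rw [zpow_neg, zpow_ofNat]; ring
    _ = 0 := by rw [← hb, neg_zero]

section Knots

variable {n : ℕ} {r : ℕ → ℝ} {σ : ℝ → ℂ} {A B C D : ℕ → ℂ}

lemma knot_pos (hpos : 0 < r 1) (hr : StrictMonoOn r (Icc 1 n)) {j : ℕ} (hj : j ∈ Icc 1 n) :
    0 < r j :=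
  hpos.trans_le (hr.monotoneOn ⟨le_rfl, hj.1.trans hj.2⟩ hj hj.1)

/-- The open gap `(r j, r (j + 1))` between consecutive knots, where `r 0` is read as `0` and
`r (n + 1)` as `∞`. -/
def knotGap (n : ℕ) (r : ℕ → ℝ) (j : ℕ) : Set ℝ :=
  {x | 0 < x ∧ (j = 0 ∨ r j < x) ∧ (j < n → x < r (j + 1))}

def knotCell (n : ℕ) (r : ℕ → ℝ) (j : ℕ) : Set ℝ :=
  {x | 0 < x ∧ (j = 0 ∨ r j < x) ∧ (j < n → x ≤ r (j + 1))}

lemma IsBLSpline.exists_eqOn_knotGap (hσ : IsBLSpline n r σ) (hn : 1 ≤ n) :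
    ∃ A B C D : ℕ → ℂ, A n = 0 ∧ B n = 0 ∧ D 0 = 0 ∧
      ∀ j ≤ n, EqOn σ (kerFun (A j) (B j) (C j) (D j)) (knotGap n r j) := by
  choose! A B C D hmid using hσ.pieces
  obtain ⟨a₀, b₀, c₀, hleft⟩ := hσ.left
  obtain ⟨c₁, d₁, hright⟩ := hσ.right
  refine ⟨fun j => if j = 0 then a₀ else if j = n then 0 else A j,
    fun j => if j = 0 then b₀ else if j = n then 0 else B j,
    fun j => if j = 0 then c₀ else if j = n then c₁ else C j,
    fun j => if j = 0 then 0 else if j = n then d₁ else D j,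
    by simp; omega, by simp; omega, by simp, fun j hj x ⟨hx0, hxl, hxr⟩ => ?_⟩
  rcases Nat.eq_zero_or_pos j with rfl | hj0
  · simpa [kerFun] using hleft x ⟨hx0, hxr hn⟩
  rcases hj.eq_or_lt with rfl | hjn
  · simpa [kerFun, hj0.ne'] using hright x (hxl.resolve_left hj0.ne')
  · simpa [kerFun, hj0.ne', hjn.ne] using hmid j hj0 hjn x ⟨hxl.resolve_left hj0.ne', hxr hjn⟩

lemma exists_mem_knotCell (hn : 1 ≤ n) {x : ℝ} (hx : 0 < x) : ∃ j ≤ n, x ∈ knotCell n r j := by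
  by_cases hxn : r n < x
  · exact ⟨n, le_rfl, hx, .inr hxn, fun h => absurd h (lt_irrefl n)⟩
  have hn' : x ≤ r (n - 1 + 1) := by rw [Nat.sub_add_cancel hn]; exact not_lt.1 hxn
  have hex : ∃ j, x ≤ r (j + 1) := ⟨n - 1, hn'⟩
  refine ⟨Nat.find hex, (Nat.find_min' hex hn').trans (Nat.sub_le n 1), hx, ?_,
    fun _ => Nat.find_spec hex⟩
  rcases Nat.eq_zero_or_pos (Nat.find hex) with h | h
  · exact .inl h
  · have := Nat.find_min hex (Nat.sub_lt h one_pos)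
    rw [Nat.sub_add_cancel (Nat.one_le_iff_ne_zero.2 h.ne')] at this
    exact .inr (not_le.1 this)

lemma exists_Ioo_subset_knotGap (hpos : 0 < r 1) (hr : StrictMonoOn r (Icc 1 n)) {j : ℕ}
    (hj : j < n) : ∃ u v, 0 ≤ u ∧ u < r (j + 1) ∧ r (j + 1) < v ∧
      Ioo u (r (j + 1)) ⊆ knotGap n r j ∧ Ioo (r (j + 1)) v ⊆ knotGap n r (j + 1) := by
  have hrj : 0 < r (j + 1) := knot_pos hpos hr ⟨by omega, by omega⟩
  refine ⟨if j = 0 then 0 else r j, if j + 1 < n then r (j + 2) else r (j + 1) + 1,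
    ?_, ?_, ?_, fun x hx => ?_, fun x hx => ⟨hrj.trans hx.1, .inr hx.1, fun h => ?_⟩⟩
  · split_ifs with h
    exacts [le_rfl, (knot_pos hpos hr ⟨by omega, by omega⟩).le]
  · split_ifs with h
    exacts [hrj, hr ⟨by omega, by omega⟩ ⟨by omega, by omega⟩ (by omega)]
  · split_ifs with h
    exacts [hr ⟨by omega, by omega⟩ ⟨by omega, by omega⟩ (by omega), lt_add_one _]
  · split_ifs at hx with h
    · exact ⟨hx.1, .inl h, fun _ => hx.2⟩
    · exact ⟨(knot_pos hpos hr ⟨by omega, by omega⟩).trans hx.1, .inr hx.1, fun _ => hx.2⟩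
  · simpa [h] using hx.2

lemma sum_mul_phi0_div_eq_of_mem_knotCell (hpos : 0 < r 1) (hr : StrictMonoOn r (Icc 1 n))
    (w : ℕ → ℂ) {j : ℕ} (hj : j ≤ n) {x : ℝ} (hx : x ∈ knotCell n r j) :
    ∑ k ∈ Finset.range n, w k * phi0 (x / r (k + 1)) =
      ∑ k ∈ Finset.range n, w k * phi0Left (r (k + 1)) x +
        ∑ k ∈ Finset.range j, w k * (phi0Right (r (k + 1)) x - phi0Left (r (k + 1)) x) := by
  have hmon := hr.monotoneOn
  have hbelow : ∀ k ∈ Finset.range j,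
      w k * phi0 (x / r (k + 1)) = w k * phi0Right (r (k + 1)) x := by
    intro k hk
    have hk := Finset.mem_range.1 hk
    have hjx := hx.2.1.resolve_left (by omega)
    rw [phi0_div_of_lt (knot_pos hpos hr ⟨by omega, by omega⟩)
      ((hmon ⟨by omega, by omega⟩ ⟨by omega, hj⟩ (by omega)).trans_lt hjx)]
  have habove : ∀ k ∈ Finset.Ico j n,
      w k * phi0 (x / r (k + 1)) = w k * phi0Left (r (k + 1)) x := by
    intro k hk
    have hk := Finset.mem_Ico.1 hk
    rw [phi0_div_of_le hx.1 ((hx.2.2 (by omega)).trans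
      (hmon ⟨by omega, by omega⟩ ⟨by omega, by omega⟩ (by omega)))]
  rw [← Finset.sum_range_add_sum_Ico _ hj, ← Finset.sum_range_add_sum_Ico _ hj,
    Finset.sum_congr rfl hbelow, Finset.sum_congr rfl habove]
  simp only [mul_sub, Finset.sum_sub_distrib]
  ring

lemma kerFun_succ_eq_of_eqOn_knotGap (hpos : 0 < r 1) (hr : StrictMonoOn r (Icc 1 n))
    (hσ : ContDiffOn ℝ 2 σ (Ioi 0))
    (hpiece : ∀ j ≤ n, EqOn σ (kerFun (A j) (B j) (C j) (D j)) (knotGap n r j))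
    {j : ℕ} (hj : j < n) :
    σ (r (j + 1)) = kerFun (A j) (B j) (C j) (D j) (r (j + 1)) ∧
      ∀ x, kerFun (A (j + 1)) (B (j + 1)) (C (j + 1)) (D (j + 1)) x =
        kerFun (A j) (B j) (C j) (D j) x + r (j + 1) ^ 2 * (B (j + 1) - B j) *
          (phi0Right (r (j + 1)) x - phi0Left (r (j + 1)) x) := by
  obtain ⟨u, v, hu, hut, htv, hsl, hsr⟩ := exists_Ioo_subset_knotGap hpos hr hj
  have ht : 0 < r (j + 1) := hu.trans_lt hut
  have hgap : ∀ i, knotGap n r i ⊆ Ioi 0 := fun i x hx => hx.1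
  have hjetl := jet2_eq_of_eqOn hσ (contDiffOn_kerFun _ _ _ _) isOpen_Ioo (hsl.trans (hgap j))
    ((hpiece j hj.le).mono hsl) ht (by rw [closure_Ioo hut.ne]; exact right_mem_Icc.2 hut.le)
  have hjetr := jet2_eq_of_eqOn hσ (contDiffOn_kerFun _ _ _ _) isOpen_Ioo
    (hsr.trans (hgap (j + 1))) ((hpiece (j + 1) hj).mono hsr) ht
    (by rw [closure_Ioo htv.ne]; exact left_mem_Icc.2 htv.le)
  exact ⟨congrArg Prod.fst hjetl, kerFun_eq_add_of_jet2_eq ht (hjetl.symm.trans hjetr)⟩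

theorem exists_phi0_repr_of_eqOn_knotGap (hn : 1 ≤ n) (hpos : 0 < r 1)
    (hr : StrictMonoOn r (Icc 1 n)) (hσ : ContDiffOn ℝ 2 σ (Ioi 0))
    (hσ0 : ContinuousWithinAt σ (Ici 0) 0) (hA : A n = 0) (hB : B n = 0) (hD : D 0 = 0)
    (hpiece : ∀ j ≤ n, EqOn σ (kerFun (A j) (B j) (C j) (D j)) (knotGap n r j)) :
    ∃ (c : ℂ) (a : ℕ → ℂ), ∀ x ∈ Ici (0 : ℝ),
      σ x = c + ∑ k ∈ Finset.range n, a k * phi0 (x / r (k + 1)) := by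
  set a : ℕ → ℂ := fun k => r (k + 1) ^ 2 * (B (k + 1) - B k)
  have hjump := fun j (hj : j < n) => kerFun_succ_eq_of_eqOn_knotGap hpos hr hσ hpiece hj
  have htele : ∀ j ≤ n, ∀ x, kerFun (A j) (B j) (C j) (D j) x = kerFun (A 0) (B 0) (C 0) (D 0) x +
      ∑ k ∈ Finset.range j, a k * (phi0Right (r (k + 1)) x - phi0Left (r (k + 1)) x) := by
    intro j
    induction j with
    | zero => simp
    | succ j ih =>
      intro hj x
      rw [(hjump j hj).2 x, ih (by omega) x, Finset.sum_range_succ]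
      ring
  -- the first piece minus `∑ a k • phi0Left` has no `log` term, while by `htele` it equals the
  -- last piece minus `∑ a k • phi0Right`, which has no `x²` and `x² log x` terms
  have hconst : ∀ x, kerFun (A 0) (B 0) (C 0) (D 0) x -
      ∑ k ∈ Finset.range n, a k * phi0Left (r (k + 1)) x = C 0 := by
    have hEq : EqOn
        (kerFun
          (A 0 - ∑ k ∈ Finset.range n, a k * ((1 + Real.log (r (k + 1))) / (r (k + 1) : ℂ) ^ 2))
          (B 0 - ∑ k ∈ Finset.range n, a k * (-1 / (r (k + 1) : ℂ) ^ 2)) (C 0) 0)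
        (kerFun 0 0 (C n - ∑ k ∈ Finset.range n, a k * (1 - Real.log (r (k + 1))))
          (D n - ∑ k ∈ Finset.range n, a k)) (Ioo 0 1) := by
      intro x _
      have h := htele n le_rfl x
      rw [Finset.sum_congr rfl fun k _ => mul_sub _ _ _, Finset.sum_sub_distrib, sum_mul_phi0Right,
        sum_mul_phi0Left] at h
      simp only [kerFun, hA, hB, hD] at h ⊢
      linear_combination -h
    obtain ⟨ha, hb, -, -⟩ := kerFun_coeffs_eq_of_eqOn le_rfl one_pos hEq
    intro x
    rw [sum_mul_phi0Left]
    simp only [kerFun, hD]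
    linear_combination (x : ℂ) ^ 2 * ha + (x : ℂ) ^ 2 * Real.log x * hb
  have hzero : σ 0 = C 0 := apply_zero_eq_of_eqOn_kerFun hσ0 hpos fun x hx => by
    rw [hpiece 0 (Nat.zero_le n) ⟨hx.1, .inl rfl, fun _ => hx.2⟩, hD]
  refine ⟨C 0, a, fun x hx => ?_⟩
  rcases (mem_Ici.1 hx).eq_or_lt with rfl | hx0
  · simp [phi0, hzero]
  obtain ⟨j, hj, hxj⟩ := exists_mem_knotCell hn hx0
  have hσx : σ x = kerFun (A j) (B j) (C j) (D j) x := by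
    by_cases hxr : j < n ∧ x = r (j + 1)
    · rw [hxr.2]
      exact (hjump j hxr.1).1
    · exact hpiece j hj ⟨hxj.1, hxj.2.1, fun h => (hxj.2.2 h).lt_of_ne fun he => hxr ⟨h, he⟩⟩
  rw [hσx, htele j hj, sum_mul_phi0_div_eq_of_mem_knotCell hpos hr a hj hxj]
  linear_combination hconst x

lemma phi0_repr_unique (hpos : 0 < r 1) (hr : StrictMonoOn r (Icc 1 n))
    {f : ℝ → ℂ} {p q : ℂ × (Fin n → ℂ)}
    (hp : ∀ x ∈ Ici (0 : ℝ), f x = p.1 + ∑ k : Fin n, p.2 k * (phi0 (x / r ((k : ℕ) + 1)) : ℂ))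
    (hq : ∀ x ∈ Ici (0 : ℝ), f x = q.1 + ∑ k : Fin n, q.2 k * (phi0 (x / r ((k : ℕ) + 1)) : ℂ)) :
    p = q := by
  have h1 : p.1 = q.1 := by simpa [phi0] using (hp 0 self_mem_Ici).symm.trans (hq 0 self_mem_Ici)
  have h2 := eq_zero_of_forall_sum_mul_phi0_div_eq_zero Finset.univ
    (fun k _ => knot_pos hpos hr ⟨by omega, by omega⟩)
    (fun i _ j _ h => Fin.ext (Nat.succ_injective (hr.injOn ⟨by omega, by omega⟩
      ⟨by omega, by omega⟩ h)))
    (w := p.2 - q.2) fun x hx => by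
      have h := (hp x hx.le).symm.trans (hq x hx.le)
      simp only [Pi.sub_apply, sub_mul, Finset.sum_sub_distrib]
      linear_combination h - h1
  exact Prod.ext h1 (funext fun k => sub_eq_zero.1 (h2 k (Finset.mem_univ k)))

end Knots

theorem stmt10_general (n : ℕ) (r : ℕ → ℝ) (hn : 1 ≤ n) (hpos : 0 < r 1)
    (hmono : ∀ j, 1 ≤ j → j < n → r j < r (j + 1))
    (σ : ℝ → ℂ)
    (hσ : IsBLSpline n r σ) :
    (∃! p : ℂ × (Fin n → ℂ), ∀ x ∈ Set.Ici (0:ℝ),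
        σ x = p.1 + ∑ k : Fin n, p.2 k * (phi0 (x / r ((k : ℕ) + 1)) : ℂ)) ∧
    (NonSingularBLS (r 1) σ → ∀ p : ℂ × (Fin n → ℂ),
        (∀ x ∈ Set.Ici (0:ℝ),
          σ x = p.1 + ∑ k : Fin n, p.2 k * (phi0 (x / r ((k : ℕ) + 1)) : ℂ)) →
        ∑ k : Fin n, p.2 k * ((r ((k : ℕ) + 1) : ℂ)) ^ (-2 : ℤ) = 0) := by
  have hr : StrictMonoOn r (Icc 1 n) :=
    strictMonoOn_of_lt_add_one ordConnected_Icc fun j _ hj _ => hmono j hj.1 (by grind)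
  obtain ⟨A, B, C, D, hA, hB, hD, hpiece⟩ := hσ.exists_eqOn_knotGap hn
  obtain ⟨c, a, hrep⟩ :=
    exists_phi0_repr_of_eqOn_knotGap hn hpos hr hσ.smooth hσ.cont0 hA hB hD hpiece
  have hrep' : ∀ x ∈ Ici (0 : ℝ),
      σ x = c + ∑ k : Fin n, a k * (phi0 (x / r ((k : ℕ) + 1)) : ℂ) := fun x hx => by
    rw [hrep x hx, Fin.sum_univ_eq_sum_range (fun k => a k * (phi0 (x / r (k + 1)) : ℂ))]
  refine ⟨⟨(c, fun k => a k), hrep', fun p hp => phi0_repr_unique hpos hr hp hrep'⟩,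
    fun hns p hp => hns.sum_mul_zpow_eq_zero hpos (fun k _ => ?_) fun x hx => hp x hx.1.le⟩
  exact hr.monotoneOn ⟨le_rfl, hn⟩ ⟨by omega, by omega⟩ (by omega)

/-- unique representation of the interpolants `σ^A`/`σ^B` as
`σ(r) = c + Σ_{k=1}^n a_k·φ₀(r/r_k)`; moreover in the non-singular case the
coefficients satisfy `Σ_{k=1}^n a_k·r_k^{−2} = 0`. -/
theorem stmt10 (n : ℕ) (r : ℕ → ℝ) (hn : 1 ≤ n) (hpos : 0 < r 1)
    (hmono : ∀ j, 1 ≤ j → j < n → r j < r (j + 1))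
    (α : ℝ) (ν : ℕ → ℝ) (σ : ℝ → ℂ)
    (hσ : IsBLSpline n r σ)
    (hint : ∀ j, 1 ≤ j → j ≤ n → σ (r j) = (ν j : ℂ))
    (hAB : σ 0 = (α : ℂ) ∨ NonSingularBLS (r 1) σ) :
    (∃! p : ℂ × (Fin n → ℂ), ∀ x ∈ Set.Ici (0:ℝ),
        σ x = p.1 + ∑ k : Fin n, p.2 k * (phi0 (x / r ((k : ℕ) + 1)) : ℂ)) ∧
    (NonSingularBLS (r 1) σ → ∀ p : ℂ × (Fin n → ℂ),
        (∀ x ∈ Set.Ici (0:ℝ),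
          σ x = p.1 + ∑ k : Fin n, p.2 k * (phi0 (x / r ((k : ℕ) + 1)) : ℂ)) →
        ∑ k : Fin n, p.2 k * ((r ((k : ℕ) + 1) : ℂ)) ^ (-2 : ℤ) = 0) :=
  stmt10_general n r hn hpos hmono σ hσ
end
end

section
/- The function η₂(r) := (4/3)·( ln 2 − φ₀(r) + φ₀(r/2) ), r ≥ 0, is a Beppo Levi L₀-spline on the knot set ρ = {1,2}, and η₂(r) = 0 for all r ≥ 2; moreover, its singular coefficient, i.e. the coefficient b of r²·ln r in its representation η₂(r) = a·r² + b·r²·ln r + c on (0,1), equals 1. -/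
open MeasureTheory Set Filter

noncomputable section

/-!
Write `φ₀ = 1 + ln + ψ` with `ψ = phi0Correction`, which vanishes on `[1, ∞)` and equals
`r² − r² ln r − 1 − ln r` on `(0, 1]`. That branch vanishes to second order at `r = 1`, so `ψ` is
`C²` on `(0, ∞)`. Since `ln (r/2) = ln r − ln 2`, the logarithms cancel in
`η₂ = (4/3) (ψ (r/2) − ψ r)`, which is therefore `C²` and vanishes for `r ≥ 2`. On `(0, 1)` and
`(1, 2)` the pieces are read off from the two branches of `φ₀`.
-/

open Real

theorem ContinuousOn.indicator_Iic {α β : Type*} [TopologicalSpace α] [LinearOrder α]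
    [OrderClosedTopology α] [TopologicalSpace β] [Zero β] {f : α → β} {s : Set α} {c : α}
    (hf : ContinuousOn f s) (hc : f c = 0) :
    ContinuousOn ((Iic c).indicator f) s := by
  rw [← piecewise_eq_indicator]
  refine ContinuousOn.piecewise (fun a ha => ?_) (hf.mono inter_subset_left) continuousOn_const
  rw [mem_singleton_iff.1 (frontier_Iic_subset c ha.2), hc, Pi.zero_apply]

section IndicatorIic

variable {E : Type*} [NormedAddCommGroup E] [NormedSpace ℝ E] {f f' f'' : ℝ → E} {c x : ℝ}
  {s : Set ℝ}

theorem hasDerivAt_indicator_Iic (hf : x ≤ c → HasDerivAt f (f' x) x) (hc : f c = 0)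
    (hc' : f' c = 0) : HasDerivAt ((Iic c).indicator f) ((Iic c).indicator f' x) x := by
  rcases lt_trichotomy x c with hxc | rfl | hxc
  · rw [indicator_of_mem (mem_Iic.2 hxc.le)]
    refine (hf hxc.le).congr_of_eventuallyEq ?_
    filter_upwards [Iic_mem_nhds hxc] with y hy using indicator_of_mem hy f
  · rw [indicator_of_mem (mem_Iic.2 le_rfl), hc', ← hasDerivWithinAt_univ, ← Iic_union_Ici]
    refine HasDerivWithinAt.union ?_ ?_
    · exact hc' ▸ (hf le_rfl).hasDerivWithinAt.congr (fun y hy => indicator_of_mem hy f)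
        (indicator_of_mem (mem_Iic.2 le_rfl) f)
    · refine (hasDerivWithinAt_const x _ 0).congr (fun y hy => ?_) (by simp [hc])
      rw [indicator_apply_eq_zero]
      intro hy'
      rw [le_antisymm (mem_Iic.1 hy') (mem_Ici.1 hy), hc]
  · rw [indicator_of_notMem (notMem_Iic.2 hxc)]
    refine (hasDerivAt_const x 0).congr_of_eventuallyEq ?_
    filter_upwards [Ioi_mem_nhds hxc] with y hy using indicator_of_notMem (notMem_Iic.2 hy) f

theorem contDiffOn_two_indicator_Iic (hs : IsOpen s) (hf : ∀ x ∈ s, HasDerivAt f (f' x) x)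
    (hf' : ∀ x ∈ s, HasDerivAt f' (f'' x) x) (hf'' : ContinuousOn f'' s) (hc : f c = 0)
    (hc' : f' c = 0) (hc'' : f'' c = 0) : ContDiffOn ℝ 2 ((Iic c).indicator f) s := by
  have hd : ∀ x ∈ s, HasDerivAt ((Iic c).indicator f) ((Iic c).indicator f' x) x :=
    fun x hx => hasDerivAt_indicator_Iic (fun _ => hf x hx) hc hc'
  have hd' : ∀ x ∈ s, HasDerivAt ((Iic c).indicator f') ((Iic c).indicator f'' x) x :=
    fun x hx => hasDerivAt_indicator_Iic (fun _ => hf' x hx) hc' hc''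
  have h1 : ContDiffOn ℝ 1 ((Iic c).indicator f') s := by
    rw [show (1 : WithTop ℕ∞) = 0 + 1 from rfl, contDiffOn_succ_iff_deriv_of_isOpen hs]
    refine ⟨fun x hx => (hd' x hx).differentiableAt.differentiableWithinAt, by simp, ?_⟩
    exact contDiffOn_zero.2 ((hf''.indicator_Iic hc'').congr fun x hx => (hd' x hx).deriv)
  rw [show (2 : WithTop ℕ∞) = 1 + 1 from rfl, contDiffOn_succ_iff_deriv_of_isOpen hs]
  exact ⟨fun x hx => (hd x hx).differentiableAt.differentiableWithinAt, by simp,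
    h1.congr fun x hx => (hd x hx).deriv⟩

end IndicatorIic

def phi0Correction : ℝ → ℝ :=
  (Iic 1).indicator fun r => r ^ 2 - r ^ 2 * log r - 1 - log r

theorem phi0_eq_add_phi0Correction (r : ℝ) : phi0 r = 1 + log r + phi0Correction r := by
  unfold phi0 phi0Correction
  split_ifs with h
  · rw [indicator_of_mem (mem_Iic.2 h)]
    ring
  · rw [indicator_of_notMem (notMem_Iic.2 (not_le.1 h)), add_zero]

theorem phi0Correction_of_one_le {r : ℝ} (hr : 1 ≤ r) : phi0Correction r = 0 :=
  indicator_apply_eq_zero.2 fun h => by rw [le_antisymm h hr]; norm_num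

theorem contDiffOn_phi0Correction : ContDiffOn ℝ 2 phi0Correction (Ioi 0) := by
  refine contDiffOn_two_indicator_Iic isOpen_Ioi (f' := fun r => r - 2 * r * log r - r⁻¹)
    (f'' := fun r => -1 - 2 * log r + (r ^ 2)⁻¹) (fun x hx => ?_) (fun x hx => ?_) ?_
    (by norm_num) (by norm_num) (by norm_num)
  · have hx : x ≠ 0 := (mem_Ioi.1 hx).ne'
    refine ((((hasDerivAt_pow 2 x).fun_sub ((hasDerivAt_pow 2 x).fun_mul
      (hasDerivAt_log hx))).sub_const 1).fun_sub (hasDerivAt_log hx)).congr_deriv ?_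
    field_simp
    ring
  · have hx : x ≠ 0 := (mem_Ioi.1 hx).ne'
    refine (((hasDerivAt_id' x).fun_sub (((hasDerivAt_id' x).const_mul 2).fun_mul
      (hasDerivAt_log hx))).fun_sub (hasDerivAt_inv hx)).congr_deriv ?_
    field_simp
    ring
  · exact ContinuousOn.add (continuousOn_const.sub (continuousOn_const.mul
      (continuousOn_log.mono fun x hx => (mem_Ioi.1 hx).ne')))
      ((continuousOn_pow 2).inv₀ fun x hx => pow_ne_zero 2 (mem_Ioi.1 hx).ne')

theorem eta2_eq_phi0Correction {x : ℝ} (hx : 0 < x) :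
    eta2 x = ((4 / 3 * (phi0Correction (x / 2) - phi0Correction x) : ℝ) : ℂ) := by
  rw [eta2, phi0_eq_add_phi0Correction, phi0_eq_add_phi0Correction, log_div hx.ne' two_ne_zero]
  ring_nf

theorem contDiffOn_eta2 : ContDiffOn ℝ 2 eta2 (Ioi 0) := by
  have hhalf : ContDiffOn ℝ 2 (fun x => phi0Correction (x / 2)) (Ioi 0) :=
    contDiffOn_phi0Correction.comp (contDiffOn_id.div_const 2) fun _ hx => mem_Ioi.2 (half_pos hx)
  refine (Complex.ofRealCLM.contDiff.comp_contDiffOn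
    ((hhalf.sub contDiffOn_phi0Correction).const_smul (4 / 3 : ℝ))).congr fun x hx => ?_
  exact eta2_eq_phi0Correction hx

theorem continuousAt_phi0 {r : ℝ} (hr : r < 1) : ContinuousAt phi0 r := by
  refine ((continuous_pow 2).sub (continuous_id.mul continuous_mul_log)).continuousAt.congr ?_
  filter_upwards [Iio_mem_nhds hr] with y hy
  rw [phi0, if_pos hy.le]
  simp only [id, Pi.sub_apply, Pi.mul_apply]
  ring

theorem continuousAt_eta2_zero : ContinuousAt eta2 0 := by
  have hhalf : ContinuousAt (fun x : ℝ => phi0 (x / 2)) 0 :=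
    (continuousAt_phi0 (by norm_num)).comp (continuous_id.div_const 2).continuousAt
  exact Complex.continuous_ofReal.continuousAt.comp (continuousAt_const.mul
    ((continuousAt_const.sub (continuousAt_phi0 zero_lt_one)).add hhalf))

theorem eta2_of_mem_Ioo_zero_one {x : ℝ} (hx : x ∈ Ioo 0 1) :
    eta2 x = (((log 2 - 3) / 3 : ℝ) : ℂ) * (x : ℂ) ^ 2 + 1 * (x : ℂ) ^ 2 * (log x : ℂ)
      + ((4 / 3 * log 2 : ℝ) : ℂ) := by
  rw [eta2, phi0, phi0, if_pos hx.2.le, if_pos (by linarith [hx.2]),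
    log_div hx.1.ne' two_ne_zero]
  push_cast
  ring

theorem eta2_of_mem_Ioo_one_two {x : ℝ} (hx : x ∈ Ioo 1 2) :
    eta2 x = (((1 + log 2) / 3 : ℝ) : ℂ) * (x : ℂ) ^ 2
      + ((-1 / 3 : ℝ) : ℂ) * (x : ℂ) ^ 2 * (log x : ℂ) + ((4 / 3 * (log 2 - 1) : ℝ) : ℂ)
      + ((-4 / 3 : ℝ) : ℂ) * (log x : ℂ) := by
  rw [eta2, phi0, phi0, if_neg (not_le.2 hx.1), if_pos (by linarith [hx.2]),
    log_div (by linarith [hx.1]) two_ne_zero]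
  push_cast
  ring

theorem eta2_of_two_le {x : ℝ} (hx : 2 ≤ x) : eta2 x = 0 := by
  rw [eta2_eq_phi0Correction (by linarith), phi0Correction_of_one_le (by linarith),
    phi0Correction_of_one_le (by linarith)]
  simp

/-- Johnson's profile `η₂(r) = (4/3)(ln 2 − φ₀(r) + φ₀(r/2))` is a Beppo
Levi `L₀`-spline on the knots `{1,2}`, vanishes for `r ≥ 2`, and its singular
coefficient (the coefficient of `r²·ln r` on `(0,1)`) equals `1`. -/
theorem stmt17 :
    IsBLSpline 2 (fun j => (j : ℝ)) eta2 ∧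
    (∀ x : ℝ, 2 ≤ x → eta2 x = 0) ∧
    (∃ a c : ℂ, ∀ x ∈ Set.Ioo (0:ℝ) 1,
      eta2 x = a * (x : ℂ) ^ 2 + 1 * (x : ℂ) ^ 2 * (Real.log x : ℂ) + c) := by
  refine ⟨⟨fun j hj hj2 => ?_, ?_, ⟨0, 0, fun x hx => ?_⟩, contDiffOn_eta2,
    continuousAt_eta2_zero.continuousWithinAt⟩, fun _ => eta2_of_two_le,
    ⟨_, _, fun _ => eta2_of_mem_Ioo_zero_one⟩⟩
  · obtain rfl : j = 1 := by omega
    exact ⟨_, _, _, _, fun x hx => eta2_of_mem_Ioo_one_two (by norm_num at hx ⊢; exact hx)⟩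
  · exact ⟨_, 1, _, fun x hx => eta2_of_mem_Ioo_zero_one (by simpa using hx)⟩
  · rw [eta2_of_two_le (by simpa using (mem_Ioi.1 hx).le)]
    simp
end
end

section
/- Minimality of the support of compactly supported Beppo Levi L₀-splines: (a) every Beppo Levi L₀-spline on the single knot set ρ = {1} that vanishes identically on [1,∞) is identically zero on [0,∞); (b) every non-singular Beppo Levi L₀-spline on the knot set ρ = {1,2} that vanishes identically on [2,∞) is identically zero on [0,∞). -/
open MeasureTheory Set Filter

noncomputable section

open Topology

/-!
Away from the knots a spline is a function `blKer a b c d` in `span {x², x² ln x, 1, ln x}`. If two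
such functions glue in a `C²` way at `x₀ > 0`, their difference has vanishing `2`-jet at `x₀`, and
this fixes three of its coefficients in terms of the fourth; in particular `d = b x₀²`. With one
knot the left piece has `d = 0` and the right piece vanishes, so `b = 0` and everything vanishes.
With knots `{1, 2}` and a non-singular left piece, the middle piece satisfies both `D = B` (at `1`)
and `D = 4B` (at `2`), so `B = D = 0`, and then all the other coefficients vanish.
-/

section IteratedDeriv

variable {𝕜 F : Type*} [NontriviallyNormedField 𝕜] [NormedAddCommGroup F] [NormedSpace 𝕜 F]

theorem Set.EqOn.iteratedDeriv_closure_inter {f g : 𝕜 → F} {s t : Set 𝕜} {n : WithTop ℕ∞}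
    {k : ℕ} (hfg : EqOn f g t) (hs : IsOpen s) (ht : IsOpen t) (hts : t ⊆ s)
    (hf : ContDiffOn 𝕜 n f s) (hg : ContDiffOn 𝕜 n g s) (hk : k ≤ n) :
    EqOn (iteratedDeriv k f) (iteratedDeriv k g) (closure t ∩ s) := by
  have hcont : ∀ {h : 𝕜 → F}, ContDiffOn 𝕜 n h s →
      ContinuousOn (iteratedDeriv k h) (closure t ∩ s) := fun hh =>
    ((hh.continuousOn_iteratedDerivWithin hk hs.uniqueDiffOn).congr
      (iteratedDerivWithin_of_isOpen hs).symm).mono inter_subset_right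
  exact (hfg.iteratedDeriv_of_isOpen ht k).of_subset_closure (hcont hf) (hcont hg)
    (subset_inter subset_closure hts) inter_subset_left

end IteratedDeriv

-- The general element of `KerL0`.
def blKer (a b c d : ℂ) (x : ℝ) : ℂ :=
  a * (x : ℂ) ^ 2 + b * (x : ℂ) ^ 2 * (Real.log x : ℂ) + c + d * (Real.log x : ℂ)

namespace blKer

variable {a b c d a' b' c' d' : ℂ} {x : ℝ}

@[simp]
theorem zero : blKer 0 0 0 0 = 0 := by
  ext x; simp [blKer]

theorem contDiffOn {n : WithTop ℕ∞} : ContDiffOn ℝ n (blKer a b c d) (Ioi 0) := by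
  have hlog : ContDiffOn ℝ n (fun x : ℝ => (Real.log x : ℂ)) (Ioi 0) :=
    Complex.ofRealCLM.contDiff.comp_contDiffOn
      (Real.contDiffOn_log.mono fun x hx => ne_of_gt hx)
  have hid : ContDiff ℝ n (fun x : ℝ => (x : ℂ)) := Complex.ofRealCLM.contDiff
  unfold blKer
  fun_prop

theorem hasDerivAt (hx : 0 < x) :
    HasDerivAt (blKer a b c d)
      (2 * a * x + b * (2 * x * (Real.log x : ℂ) + x) + d / x) x := by
  have hxC : (x : ℂ) ≠ 0 := Complex.ofReal_ne_zero.mpr hx.ne'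
  have hlog : HasDerivAt (fun y : ℝ => (Real.log y : ℂ)) ((x⁻¹ : ℝ) : ℂ) x :=
    (Real.hasDerivAt_log hx.ne').ofReal_comp
  have hsq : HasDerivAt (fun y : ℝ => (y : ℂ) ^ 2) (2 * x) x := by
    simpa using (hasDerivAt_pow 2 (x : ℂ)).comp_ofReal
  refine ((((hsq.const_mul a).add ((hsq.const_mul b).mul hlog)).add_const c).add
    (hlog.const_mul d)).congr_deriv ?_
  push_cast
  field_simp

theorem hasDerivAt_deriv (hx : 0 < x) :
    HasDerivAt (deriv (blKer a b c d))
      (2 * a + b * (2 * (Real.log x : ℂ) + 3) - d / x ^ 2) x := by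
  have hxC : (x : ℂ) ≠ 0 := Complex.ofReal_ne_zero.mpr hx.ne'
  have hid : HasDerivAt (fun y : ℝ => (y : ℂ)) 1 x := by
    simpa using (hasDerivAt_id x).ofReal_comp
  have hlog : HasDerivAt (fun y : ℝ => (Real.log y : ℂ)) ((x⁻¹ : ℝ) : ℂ) x :=
    (Real.hasDerivAt_log hx.ne').ofReal_comp
  refine HasDerivAt.congr_of_eventuallyEq
    (f := fun y : ℝ => a * (2 * y) + b * (2 * y * (Real.log y : ℂ) + y) + d * (y : ℂ)⁻¹)
    ?_ ?_
  · refine (((hid.const_mul 2).const_mul a).add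
      ((((hid.const_mul 2).mul hlog).add hid).const_mul b) |>.add
      ((hid.inv hxC).const_mul d)).congr_deriv ?_
    push_cast
    field_simp
    ring
  · filter_upwards [Ioi_mem_nhds hx] with y hy
    rw [(hasDerivAt hy).deriv]
    ring

theorem iteratedDeriv_one (hx : 0 < x) :
    iteratedDeriv 1 (blKer a b c d) x =
      2 * a * x + b * (2 * x * (Real.log x : ℂ) + x) + d / x := by
  rw [_root_.iteratedDeriv_one, (hasDerivAt hx).deriv]

theorem iteratedDeriv_two (hx : 0 < x) :
    iteratedDeriv 2 (blKer a b c d) x = 2 * a + b * (2 * (Real.log x : ℂ) + 3) - d / x ^ 2 := by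
  rw [iteratedDeriv_succ, _root_.iteratedDeriv_one, (hasDerivAt_deriv hx).deriv]

theorem sub_coeffs_of_iteratedDeriv_eq (hx : 0 < x)
    (h : ∀ k ≤ 2, iteratedDeriv k (blKer a b c d) x = iteratedDeriv k (blKer a' b' c' d') x) :
    d - d' = (b - b') * x ^ 2 ∧ a - a' = -(b - b') * (1 + Real.log x) ∧
      c - c' = (b - b') * x ^ 2 * (1 - Real.log x) := by
  have hxC : (x : ℂ) ≠ 0 := Complex.ofReal_ne_zero.mpr hx.ne'
  have h0 := h 0 (by norm_num)
  have h1 := h 1 (by norm_num)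
  have h2 := h 2 le_rfl
  rw [iteratedDeriv_zero, iteratedDeriv_zero] at h0
  rw [iteratedDeriv_one hx, iteratedDeriv_one hx] at h1
  rw [iteratedDeriv_two hx, iteratedDeriv_two hx] at h2
  unfold blKer at h0
  field_simp at h1 h2
  have hd : d - d' = (b - b') * x ^ 2 := by linear_combination (h1 - h2) / 2
  have ha : a - a' = -(b - b') * (1 + Real.log x) :=
    mul_left_cancel₀ (pow_ne_zero 2 hxC) (by linear_combination (h1 - hd) / 2)
  exact ⟨hd, ha, by linear_combination h0 - (x : ℂ) ^ 2 * ha - (Real.log x : ℂ) * hd⟩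

end blKer

theorem iteratedDeriv_blKer_eq_of_eqOn {η : ℝ → ℂ} (hη : ContDiffOn ℝ 2 η (Ioi 0))
    {a b c d a' b' c' d' : ℂ} {l x₀ u : ℝ} (hl : 0 ≤ l) (hlx : l < x₀) (hxu : x₀ < u)
    (hL : EqOn η (blKer a b c d) (Ioo l x₀)) (hR : EqOn η (blKer a' b' c' d') (Ioo x₀ u))
    {k : ℕ} (hk : k ≤ 2) :
    iteratedDeriv k (blKer a b c d) x₀ = iteratedDeriv k (blKer a' b' c' d') x₀ := by
  have hx₀ : x₀ ∈ Ioi (0 : ℝ) := hl.trans_lt hlx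
  have side : ∀ {t : Set ℝ} {a b c d : ℂ}, IsOpen t → t ⊆ Ioi 0 → x₀ ∈ closure t →
      EqOn η (blKer a b c d) t →
      iteratedDeriv k η x₀ = iteratedDeriv k (blKer a b c d) x₀ :=
    fun ht hts hcl heq => heq.iteratedDeriv_closure_inter isOpen_Ioi ht hts hη
      blKer.contDiffOn (by exact_mod_cast hk) ⟨hcl, hx₀⟩
  refine (side isOpen_Ioo (fun x hx => hl.trans_lt hx.1) ?_ hL).symm.trans
    (side isOpen_Ioo (fun x hx => hx₀.trans hx.1) ?_ hR)
  · rw [closure_Ioo hlx.ne]; exact right_mem_Icc.2 hlx.le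
  · rw [closure_Ioo hxu.ne]; exact left_mem_Icc.2 hxu.le

namespace IsBLSpline

variable {n : ℕ} {r : ℕ → ℝ} {η : ℝ → ℂ}

theorem continuousOn_Ici (hη : IsBLSpline n r η) : ContinuousOn η (Ici 0) := by
  intro x hx
  rcases (mem_Ici.1 hx).eq_or_lt with rfl | hpos
  · exact hη.cont0
  · exact (hη.smooth.continuousOn.continuousAt (Ioi_mem_nhds hpos)).continuousWithinAt

theorem eqOn_zero_of_eqOn_Ioo_of_eqOn_Ioi (hη : IsBLSpline n r η) {x₁ : ℝ} (hx₁ : 0 < x₁)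
    (hlt : EqOn η 0 (Ioo 0 x₁)) (hgt : EqOn η 0 (Ioi x₁)) : EqOn η 0 (Ici 0) := by
  refine (hlt.union hgt).of_subset_closure hη.continuousOn_Ici continuousOn_const
    (union_subset (Ioo_subset_Ioi_self.trans Ioi_subset_Ici_self) (Ioi_subset_Ici hx₁.le)) ?_
  rw [closure_union, closure_Ioo hx₁.ne, closure_Ioi]
  intro x hx
  rcases le_total x x₁ with h | h
  · exact Or.inl ⟨hx, h⟩
  · exact Or.inr h

theorem eqOn_zero_of_one_knot (hη : IsBLSpline 1 (fun j => (j : ℝ)) η)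
    (hvan : ∀ x : ℝ, 1 ≤ x → η x = 0) : EqOn η 0 (Ici 0) := by
  obtain ⟨a, b, c, hleft⟩ := hη.left
  have hL : EqOn η (blKer a b c 0) (Ioo 0 1) := fun x hx => by
    simpa [blKer] using hleft x (by simpa using hx)
  have hR : EqOn η (blKer 0 0 0 0) (Ioo 1 2) := fun x hx => by simpa using hvan x hx.1.le
  obtain ⟨hd, ha, hc⟩ := blKer.sub_coeffs_of_iteratedDeriv_eq one_pos fun k hk =>
    iteratedDeriv_blKer_eq_of_eqOn hη.smooth le_rfl one_pos one_lt_two hL hR hk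
  push_cast at hd ha hc
  simp only [Real.log_one, Complex.ofReal_zero] at ha hc
  obtain rfl : b = 0 := by linear_combination -hd
  obtain rfl : a = 0 := by linear_combination ha
  obtain rfl : c = 0 := by linear_combination hc
  exact hη.eqOn_zero_of_eqOn_Ioo_of_eqOn_Ioi one_pos (by simpa using hL) fun x hx => hvan x hx.le

theorem eqOn_zero_of_two_knots (hη : IsBLSpline 2 (fun j => (j : ℝ)) η)
    (hns : NonSingularBLS 1 η) (hvan : ∀ x : ℝ, 2 ≤ x → η x = 0) : EqOn η 0 (Ici 0) := by
  obtain ⟨a, c, hleft⟩ := hns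
  obtain ⟨A, B, C, D, hmid⟩ := hη.pieces 1 le_rfl le_rfl
  have hL : EqOn η (blKer a 0 c 0) (Ioo 0 1) := fun x hx => by simpa [blKer] using hleft x hx
  have hM : EqOn η (blKer A B C D) (Ioo 1 2) := fun x hx => by
    simpa [blKer] using hmid x (by simpa using hx)
  have hR : EqOn η (blKer 0 0 0 0) (Ioo 2 3) := fun x hx => by simpa using hvan x hx.1.le
  obtain ⟨hd₁, ha₁, hc₁⟩ := blKer.sub_coeffs_of_iteratedDeriv_eq one_pos fun k hk =>
    iteratedDeriv_blKer_eq_of_eqOn hη.smooth le_rfl one_pos one_lt_two hL hM hk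
  obtain ⟨hd₂, ha₂, hc₂⟩ := blKer.sub_coeffs_of_iteratedDeriv_eq two_pos fun k hk =>
    iteratedDeriv_blKer_eq_of_eqOn hη.smooth zero_le_one one_lt_two (by norm_num) hM hR hk
  push_cast at hd₁ hd₂ ha₁ ha₂ hc₁ hc₂
  simp only [Real.log_one, Complex.ofReal_zero] at ha₁ hc₁
  obtain rfl : B = 0 := by linear_combination -(hd₁ + hd₂) / 3
  obtain rfl : D = 0 := by linear_combination hd₂
  obtain rfl : A = 0 := by linear_combination ha₂
  obtain rfl : C = 0 := by linear_combination hc₂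
  obtain rfl : a = 0 := by linear_combination ha₁
  obtain rfl : c = 0 := by linear_combination hc₁
  refine hη.eqOn_zero_of_eqOn_Ioo_of_eqOn_Ioi one_pos (by simpa using hL) fun x hx => ?_
  rcases lt_or_ge x 2 with h | h
  · simpa using hM ⟨hx, h⟩
  · exact hvan x h

end IsBLSpline

/-- minimality of supports: (a) a Beppo Levi `L₀`-spline on the single
knot `{1}` vanishing on `[1,∞)` vanishes identically on `[0,∞)`; (b) a non-singular
Beppo Levi `L₀`-spline on the knots `{1,2}` vanishing on `[2,∞)` vanishes identically
on `[0,∞)`. -/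
theorem stmt19 :
    (∀ η : ℝ → ℂ, IsBLSpline 1 (fun j => (j : ℝ)) η →
      (∀ x : ℝ, 1 ≤ x → η x = 0) → ∀ x : ℝ, 0 ≤ x → η x = 0) ∧
    (∀ η : ℝ → ℂ, IsBLSpline 2 (fun j => (j : ℝ)) η → NonSingularBLS 1 η →
      (∀ x : ℝ, 2 ≤ x → η x = 0) → ∀ x : ℝ, 0 ≤ x → η x = 0) :=
  ⟨fun _ hη hvan _ hx => hη.eqOn_zero_of_one_knot hvan hx,
    fun _ hη hns hvan _ hx => hη.eqOn_zero_of_two_knots hns hvan hx⟩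
end
end
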